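/- arXiv:2206.11798 — 4 statements merged into one kernel-verified Lean document; each statement's English description precedes it below -/
import Mathlib

section
/- Let (b_n)_{n≥0} be the moment sequence of a real random variable X with b_0 = 1, and suppose b_{4m} = (b_{2m})² for some m ≥ 1. Then X² is almost surely constant equal to b_{2m}^{1/m}, the distribution of X is supported on the two points ±b_{2m}^{1/(2m)}, and with p = (b_1 + b_{2m}^{1/(2m)})/(2 b_{2m}^{1/(2m)}) one has b_{2n} = b_{2m}^{n/m} and b_{2n+1} = b_{2m}^{(2n+1)/(2m)}(2p−1) for all n ≥ 0. -/
open MeasureTheory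

/-- If `b` is the moment sequence of `X` with `b 0 = 1` and `b (4m) = (b (2m))²` for
some `m ≥ 1`, then `X²` is a.s. constant equal to `b (2m)^(1/m)`, the distribution of
`X` is supported on the two points `± r` with `r = b (2m)^(1/(2m))`, and with
`p = (b 1 + r)/(2r)` one has `b (2n) = r^(2n)` and `b (2n+1) = r^(2n+1) (2p - 1)`. -/
theorem moment_seq_even_degenerate
    {Ω : Type*} [MeasureSpace Ω] [IsProbabilityMeasure (volume : Measure Ω)]
    (X : Ω → ℝ) (hint : ∀ n : ℕ, Integrable (fun ω => X ω ^ n) (volume : Measure Ω))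
    (b : ℕ → ℝ) (hb : ∀ n : ℕ, b n = ∫ ω, X ω ^ n ∂(volume : Measure Ω))
    (hb0 : b 0 = 1) (m : ℕ) (hm : 1 ≤ m) (hdeg : b (4 * m) = (b (2 * m)) ^ 2)
    (r p : ℝ) (hr : r = (b (2 * m)) ^ ((1 : ℝ) / (2 * m)))
    (hp : p = (b 1 + r) / (2 * r)) :
    (∀ᵐ ω ∂(volume : Measure Ω), X ω ^ 2 = (b (2 * m)) ^ ((1 : ℝ) / m)) ∧
    (∀ᵐ ω ∂(volume : Measure Ω), X ω = r ∨ X ω = -r) ∧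
    (∀ n : ℕ, b (2 * n) = r ^ (2 * n) ∧ b (2 * n + 1) = r ^ (2 * n + 1) * (2 * p - 1)) := by
  set μ : Measure Ω := volume
  set c : ℝ := b (2 * m) with hc
  have hm0 : (m : ℝ) ≠ 0 := Nat.cast_ne_zero.mpr (by omega)
  -- c ≥ 0
  have hcnn : 0 ≤ c := by
    rw [hc, hb]
    exact integral_nonneg fun ω => Even.pow_nonneg ⟨m, two_mul m⟩ _
  -- expand (X^{2m} - c)^2
  have heq : (fun ω => (X ω ^ (2 * m) - c) ^ 2)
      = fun ω => X ω ^ (4 * m) - 2 * c * X ω ^ (2 * m) + c ^ 2 := by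
    funext ω
    have h4 : X ω ^ (4 * m) = (X ω ^ (2 * m)) ^ 2 := by
      rw [← pow_mul]; ring_nf
    rw [h4]; ring
  have hint2 : Integrable (fun ω => X ω ^ (4 * m) - 2 * c * X ω ^ (2 * m) + c ^ 2) μ :=
    ((hint (4 * m)).sub ((hint (2 * m)).const_mul (2 * c))).add (integrable_const _)
  have hintsq : Integrable (fun ω => (X ω ^ (2 * m) - c) ^ 2) μ := by
    rw [heq]; exact hint2
  have h2i : Integrable (fun ω => 2 * c * X ω ^ (2 * m)) μ := (hint (2 * m)).const_mul _
  have hI : ∫ ω, (X ω ^ (2 * m) - c) ^ 2 ∂μ = 0 := by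
    have e1 : ∫ ω, (X ω ^ (4 * m) - 2 * c * X ω ^ (2 * m) + c ^ 2) ∂μ
        = (∫ ω, (X ω ^ (4 * m) - 2 * c * X ω ^ (2 * m)) ∂μ) + ∫ _ω, c ^ 2 ∂μ :=
      integral_add ((hint (4 * m)).sub h2i) (integrable_const _)
    have e2 : ∫ ω, (X ω ^ (4 * m) - 2 * c * X ω ^ (2 * m)) ∂μ
        = (∫ ω, X ω ^ (4 * m) ∂μ) - ∫ ω, 2 * c * X ω ^ (2 * m) ∂μ :=
      integral_sub (hint (4 * m)) h2i
    rw [heq, e1, e2, integral_const_mul, integral_const, probReal_univ]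
    simp only [ENNReal.toReal_one, one_smul]
    rw [← hb, ← hb, hdeg]
    ring
  -- X^{2m} = c a.e.
  have haec : ∀ᵐ ω ∂μ, X ω ^ (2 * m) = c := by
    have h0 := (integral_eq_zero_iff_of_nonneg (fun ω => sq_nonneg _) hintsq).mp hI
    filter_upwards [h0] with ω hω
    have : (X ω ^ (2 * m) - c) ^ 2 = 0 := hω
    nlinarith [this]
  -- X^2 = c^(1/m) a.e.
  have hae2 : ∀ᵐ ω ∂μ, X ω ^ 2 = c ^ ((1 : ℝ) / m) := by
    filter_upwards [haec] with ω hω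
    have hpm : (X ω ^ 2) ^ m = c := by rw [← pow_mul]; exact hω
    rw [← hpm, one_div, Real.pow_rpow_inv_natCast (sq_nonneg _) (by omega)]
  -- r^2 = c^(1/m)
  have hr2 : r ^ 2 = c ^ ((1 : ℝ) / m) := by
    rw [hr, ← Real.rpow_natCast (c ^ ((1 : ℝ) / (2 * m))) 2,
      ← Real.rpow_mul hcnn]
    congr 1
    push_cast
    field_simp
  have hrnn : 0 ≤ r := by rw [hr]; exact Real.rpow_nonneg hcnn _
  -- X = r or X = -r a.e.
  have haepm : ∀ᵐ ω ∂μ, X ω = r ∨ X ω = -r := by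
    filter_upwards [hae2] with ω hω
    have h : (X ω - r) * (X ω + r) = 0 := by
      have : X ω ^ 2 = r ^ 2 := by rw [hω, hr2]
      nlinarith [this]
    rcases mul_eq_zero.mp h with h | h
    · left; linarith
    · right; linarith
  refine ⟨hae2, haepm, fun n => ?_⟩
  -- even moments
  have hbeven : b (2 * n) = r ^ (2 * n) := by
    rw [hb]
    have : ∫ ω, X ω ^ (2 * n) ∂μ = ∫ _ω, r ^ (2 * n) ∂μ := by
      refine integral_congr_ae ?_
      filter_upwards [haepm] with ω hω
      rcases hω with h | h
      · rw [h]
      · rw [h, Even.neg_pow ⟨n, two_mul n⟩]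
    rw [this, integral_const, probReal_univ]
    simp
  -- odd moments
  have hbodd : b (2 * n + 1) = r ^ (2 * n) * b 1 := by
    rw [hb, hb]
    have : ∫ ω, X ω ^ (2 * n + 1) ∂μ = ∫ ω, r ^ (2 * n) * X ω ∂μ := by
      refine integral_congr_ae ?_
      filter_upwards [haepm] with ω hω
      rcases hω with h | h
      · rw [h, pow_succ]
      · rw [h, pow_succ, Even.neg_pow ⟨n, two_mul n⟩]
    rw [this, integral_const_mul]
    congr 1
    exact integral_congr_ae (Filter.Eventually.of_forall fun ω => by simp)
  refine ⟨hbeven, ?_⟩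
  rw [hbodd]
  by_cases hr0 : r = 0
  · have hb1 : b 1 = 0 := by
      rw [hb]
      have : ∫ ω, X ω ^ 1 ∂μ = ∫ _ω, (0 : ℝ) ∂μ := by
        refine integral_congr_ae ?_
        filter_upwards [haepm] with ω hω
        rcases hω with h | h <;> simp [h, hr0]
      rw [this, integral_zero]
    rw [hb1, hr0]
    simp
  · rw [hp]
    field_simp
    ring
end

section
/- If a sequence (β_n)_{n≥0} is a Hamburger moment sequence (i.e., all Hankel matrices [β_{i+j}]_{0≤i,j≤m} and all shifted Hankel matrices [β_{i+j+1}]_{0≤i,j≤m} are positive semidefinite, with support in [0,1]) of the form β_n = exp(−α_n t) for all t > 0 with α_0 = 0 and α_n > 0, then the sequence (α_n) is concave: 2α_m ≥ α_{m−1} + α_{m+1} for all m ≥ 1. -/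
open MeasureTheory

/-- If for every `t > 0` the sequence `(exp (-αₙ t))` is the moment sequence of a
probability measure supported in `[0,1]`, with `α₀ = 0` and `αₙ > 0` for `n ≥ 1`,
then `(αₙ)` is concave: `2 αₘ ≥ αₘ₋₁ + αₘ₊₁` for all `m ≥ 1`. -/
theorem alpha_concave (α : ℕ → ℝ) (h0 : α 0 = 0) (hpos : ∀ n, 1 ≤ n → 0 < α n)
    (hmom : ∀ t : ℝ, 0 < t → ∃ μ : Measure ℝ, IsProbabilityMeasure μ ∧
      μ (Set.Icc (0 : ℝ) 1)ᶜ = 0 ∧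
      ∀ n : ℕ, ∫ x, x ^ n ∂μ = Real.exp (-(α n) * t)) :
    ∀ m : ℕ, 1 ≤ m → α (m - 1) + α (m + 1) ≤ 2 * α m := by
  intro m hm
  obtain ⟨k, rfl⟩ : ∃ k, m = k + 1 := ⟨m - 1, by omega⟩
  have hk1 : k + 1 - 1 = k := by omega
  rw [hk1]
  obtain ⟨μ, hprob, hsupp, hintg⟩ := hmom 1 one_pos
  have hae : ∀ᵐ x ∂μ, x ∈ Set.Icc (0:ℝ) 1 := by
    rw [ae_iff]
    simpa [Set.compl_def] using hsupp
  have hint : ∀ n : ℕ, Integrable (fun x => x ^ n) μ := by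
    intro n
    refine Integrable.mono' (integrable_const 1) ?_ ?_
    · exact (measurable_id.pow_const n).aestronglyMeasurable
    · filter_upwards [hae] with x hx
      rw [Real.norm_eq_abs, abs_pow]
      refine pow_le_one₀ (abs_nonneg _) ?_
      rw [abs_of_nonneg hx.1]; exact hx.2
  set β : ℕ → ℝ := fun n => Real.exp (-(α n) * 1) with hβdef
  have hβ : ∀ n, ∫ x, x ^ n ∂μ = β n := hintg
  have key : ∀ a b : ℝ,
      0 ≤ a ^ 2 * β k + 2 * a * b * β (k + 1) + b ^ 2 * β (k + 2) := by
    intro a b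
    have hnn : 0 ≤ ∫ x, (a ^ 2 * x ^ k + 2 * a * b * x ^ (k + 1)
        + b ^ 2 * x ^ (k + 2)) ∂μ := by
      refine integral_nonneg_of_ae ?_
      filter_upwards [hae] with x hx
      have heq : a ^ 2 * x ^ k + 2 * a * b * x ^ (k + 1) + b ^ 2 * x ^ (k + 2)
          = x ^ k * (a + b * x) ^ 2 := by ring
      rw [heq]
      exact mul_nonneg (pow_nonneg hx.1 _) (sq_nonneg _)
    have hi1 : Integrable (fun x : ℝ => a ^ 2 * x ^ k + 2 * a * b * x ^ (k + 1)) μ :=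
      ((hint k).const_mul _).add ((hint (k + 1)).const_mul _)
    have e1 : ∫ x, (a ^ 2 * x ^ k + 2 * a * b * x ^ (k + 1)
          + b ^ 2 * x ^ (k + 2)) ∂μ
        = (∫ x, (a ^ 2 * x ^ k + 2 * a * b * x ^ (k + 1)) ∂μ)
          + ∫ x, b ^ 2 * x ^ (k + 2) ∂μ :=
      integral_add hi1 ((hint (k + 2)).const_mul _)
    have e2 : ∫ x, (a ^ 2 * x ^ k + 2 * a * b * x ^ (k + 1)) ∂μ
        = (∫ x, a ^ 2 * x ^ k ∂μ) + ∫ x, 2 * a * b * x ^ (k + 1) ∂μ :=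
      integral_add ((hint k).const_mul _) ((hint (k + 1)).const_mul _)
    have e3 : ∫ x, a ^ 2 * x ^ k ∂μ = a ^ 2 * β k := by
      rw [integral_const_mul, hβ]
    have e4 : ∫ x, 2 * a * b * x ^ (k + 1) ∂μ = 2 * a * b * β (k + 1) := by
      rw [integral_const_mul, hβ]
    have e5 : ∫ x, b ^ 2 * x ^ (k + 2) ∂μ = b ^ 2 * β (k + 2) := by
      rw [integral_const_mul, hβ]
    rw [e1, e2, e3, e4, e5] at hnn
    exact hnn
  have hβpos : ∀ n, 0 < β n := fun n => Real.exp_pos _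
  have hkey := key (β (k + 1)) (-(β k))
  have hsq : β (k + 1) ^ 2 ≤ β k * β (k + 2) := by
    nlinarith [hkey, hβpos k, hβpos (k + 1), hβpos (k + 2)]
  have hexp : Real.exp (-(α (k + 1)) * 1 + -(α (k + 1)) * 1)
      ≤ Real.exp (-(α k) * 1 + -(α (k + 2)) * 1) := by
    rw [Real.exp_add, Real.exp_add]
    calc Real.exp (-(α (k + 1)) * 1) * Real.exp (-(α (k + 1)) * 1)
        = β (k + 1) ^ 2 := by rw [hβdef]; ring
      _ ≤ β k * β (k + 2) := hsq
      _ = Real.exp (-(α k) * 1) * Real.exp (-(α (k + 2)) * 1) := rfl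
  have := Real.exp_le_exp.mp hexp
  have hfix : k + 1 + 1 = k + 2 := by omega
  rw [hfix]
  linarith
end

section
/- Under the Lancaster expansion ρ(dx,dy) = dμ(x)dμ(y)·Σ_{n≥0} exp(−α_n t) h_n(x)h_n(y), the fourth difference moment equals E(X_τ − X_{τ+t})⁴ = 2(m_4 + 3m_2²) − 2exp(−α_1 t)(4m_2 m_4 − 3m_3²)/m_2 + 6exp(−α_2 t)(m_2 m_4 − m_3² − m_2³)/m_2, where m_j are the centered moments of μ. -/
open MeasureTheory Polynomial

/-- Under the Lancaster expansion (encoded via joint polynomial moments), with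
orthonormal polynomials `hₙ` of degree `n` and positive leading coefficients, the
fourth difference moment equals
`E (X_τ - X_{τ+t})⁴ = 2(m₄ + 3m₂²) - 2 e^{-α₁ t}(4m₂m₄ - 3m₃²)/m₂
  + 6 e^{-α₂ t}(m₂m₄ - m₃² - m₂³)/m₂`. -/
theorem lancaster_fourth_difference_moment
    {Ω : Type*} [MeasureSpace Ω] [IsProbabilityMeasure (volume : Measure Ω)]
    (X : ℝ → Ω → ℝ) (μ : Measure ℝ) [IsProbabilityMeasure μ]
    (hint : ∀ n : ℕ, Integrable (fun x => x ^ n) μ)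
    (ν : ℝ) (hν : ν = ∫ x, x ∂μ)
    (m : ℕ → ℝ) (hm : ∀ j : ℕ, m j = ∫ x, (x - ν) ^ j ∂μ)
    (hpos : 0 < m 2 * (m 2 * m 4 - (m 3) ^ 2 - (m 2) ^ 3))
    (h : ℕ → Polynomial ℝ)
    (hdeg : ∀ n : ℕ, (h n).natDegree = n)
    (hlead : ∀ n : ℕ, 0 < (h n).leadingCoeff)
    (hortho : ∀ i j : ℕ, ∫ x, (h i).eval x * (h j).eval x ∂μ
        = if i = j then 1 else 0)
    (α : ℕ → ℝ) (hα0 : α 0 = 0)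
    (τ t : ℝ)
    (hintΩ : ∀ p q : Polynomial ℝ,
      Integrable (fun ω => p.eval (X τ ω) * q.eval (X (τ + t) ω)) (volume : Measure Ω))
    (hjoint : ∀ p q : Polynomial ℝ,
      ∫ ω, p.eval (X τ ω) * q.eval (X (τ + t) ω) ∂(volume : Measure Ω)
        = ∑' n : ℕ, Real.exp (-(α n) * t) * (∫ x, p.eval x * (h n).eval x ∂μ)
            * (∫ x, q.eval x * (h n).eval x ∂μ)) :
    ∫ ω, (X τ ω - X (τ + t) ω) ^ 4 ∂(volume : Measure Ω)
      = 2 * (m 4 + 3 * (m 2) ^ 2)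
        - 2 * Real.exp (-(α 1) * t) * (4 * m 2 * m 4 - 3 * (m 3) ^ 2) / m 2
        + 6 * Real.exp (-(α 2) * t) * (m 2 * m 4 - (m 3) ^ 2 - (m 2) ^ 3) / m 2 := by
  classical
  -- raw moments
  obtain ⟨M, hMdef⟩ : ∃ M : ℕ → ℝ, ∀ j : ℕ, M j = ∫ x, x ^ j ∂μ := ⟨_, fun _ => rfl⟩
  have hM0 : M 0 = 1 := by simp [hMdef 0]
  -- integrability of polynomial functions
  have intPoly : ∀ p : Polynomial ℝ, Integrable (fun x => p.eval x) μ := by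
    intro p
    have : (fun x => p.eval x)
        = fun x => ∑ i ∈ Finset.range (p.natDegree + 1), p.coeff i * x ^ i :=
      funext fun x => p.eval_eq_sum_range x
    rw [this]
    exact integrable_finset_sum _ fun i _ => (hint i).const_mul _
  -- a workhorse: integrals of explicit quartics
  have int4 : ∀ c0 c1 c2 c3 c4 : ℝ,
      ∫ x, (c0 + c1 * x + c2 * x ^ 2 + c3 * x ^ 3 + c4 * x ^ 4) ∂μ
        = c0 + c1 * M 1 + c2 * M 2 + c3 * M 3 + c4 * M 4 := by
    intro c0 c1 c2 c3 c4
    have I1 : Integrable (fun x : ℝ => c1 * x ^ 1) μ := (hint 1).const_mul c1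
    have I2 : Integrable (fun x : ℝ => c2 * x ^ 2) μ := (hint 2).const_mul c2
    have I3 : Integrable (fun x : ℝ => c3 * x ^ 3) μ := (hint 3).const_mul c3
    have I4 : Integrable (fun x : ℝ => c4 * x ^ 4) μ := (hint 4).const_mul c4
    have I34 : Integrable (fun x : ℝ => c3 * x ^ 3 + c4 * x ^ 4) μ := I3.add I4
    have I234 : Integrable (fun x : ℝ => c2 * x ^ 2 + (c3 * x ^ 3 + c4 * x ^ 4)) μ := I2.add I34
    have I1234 : Integrable
        (fun x : ℝ => c1 * x ^ 1 + (c2 * x ^ 2 + (c3 * x ^ 3 + c4 * x ^ 4))) μ := I1.add I234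
    have : (fun x : ℝ => c0 + c1 * x + c2 * x ^ 2 + c3 * x ^ 3 + c4 * x ^ 4)
        = fun x : ℝ => c0 + (c1 * x ^ 1 + (c2 * x ^ 2 + (c3 * x ^ 3 + c4 * x ^ 4))) :=
      funext fun x => by ring
    rw [this, integral_add (integrable_const c0) I1234,
      integral_add I1 I234, integral_add I2 I34,
      integral_add I3 I4, integral_const_mul, integral_const_mul, integral_const_mul,
      integral_const_mul, integral_const]
    simp only [measure_univ, probReal_univ, ENNReal.toReal_one, smul_eq_mul, one_mul]
    rw [hMdef 1, hMdef 2, hMdef 3, hMdef 4]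
    ring
  -- determine h 0
  obtain ⟨c, hc⟩ := Polynomial.natDegree_eq_zero.mp (hdeg 0)
  have hc1 : c = 1 := by
    have e := hortho 0 0
    rw [if_pos rfl, ← hc] at e
    simp only [Polynomial.eval_C] at e
    rw [integral_const] at e
    simp only [measure_univ, probReal_univ, ENNReal.toReal_one, smul_eq_mul, one_mul] at e
    have hcpos : 0 < c := by
      have := hlead 0
      rw [← hc, Polynomial.leadingCoeff_C] at this
      exact this
    have : (c - 1) * (c + 1) = 0 := by linear_combination e
    rcases mul_eq_zero.mp this with h' | h'
    · linarith
    · linarith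
  have hh0 : ∀ x : ℝ, (h 0).eval x = 1 := by
    intro x; rw [← hc, hc1]; simp
  -- determine the shape of h 1
  obtain ⟨a, b, ha, heval1⟩ :
      ∃ a b : ℝ, 0 < a ∧ ∀ x : ℝ, (h 1).eval x = b + a * x := by
    refine ⟨(h 1).coeff 1, (h 1).coeff 0, ?_, ?_⟩
    · have := hlead 1
      rwa [Polynomial.leadingCoeff, hdeg 1] at this
    · intro x
      rw [Polynomial.eval_eq_sum_range, hdeg 1]
      simp [Finset.sum_range_succ]
  -- determine the shape of h 2
  obtain ⟨p2, q2, r2, hp2, heval2⟩ :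
      ∃ p2 q2 r2 : ℝ, 0 < p2 ∧ ∀ x : ℝ, (h 2).eval x = r2 + q2 * x + p2 * x ^ 2 := by
    refine ⟨(h 2).coeff 2, (h 2).coeff 1, (h 2).coeff 0, ?_, ?_⟩
    · have := hlead 2
      rwa [Polynomial.leadingCoeff, hdeg 2] at this
    · intro x
      rw [Polynomial.eval_eq_sum_range, hdeg 2]
      simp [Finset.sum_range_succ]
  -- low-order coefficients against h n vanish
  have z0 : ∀ n : ℕ, n ≠ 0 → ∫ x, (h n).eval x ∂μ = 0 := by
    intro n hn
    have e := hortho 0 n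
    rw [if_neg (fun h' => hn h'.symm)] at e
    simpa only [hh0, one_mul] using e
  have z1 : ∀ n : ℕ, 2 ≤ n → ∫ x, x * (h n).eval x ∂μ = 0 := by
    intro n hn
    have e := hortho 1 n
    rw [if_neg (by omega)] at e
    have i1 := intPoly (h n)
    have i2 : Integrable (fun x => x * (h n).eval x) μ := by
      have := intPoly (Polynomial.X * h n)
      simp only [Polynomial.eval_mul, Polynomial.eval_X] at this
      exact this
    have e2 : ∫ x, (b * (h n).eval x + a * (x * (h n).eval x)) ∂μ = 0 := by
      rw [← e]
      congr 1
      funext x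
      rw [heval1]; ring
    have ib : Integrable (fun x : ℝ => b * (h n).eval x) μ := i1.const_mul b
    have ia : Integrable (fun x : ℝ => a * (x * (h n).eval x)) μ := i2.const_mul a
    rw [integral_add ib ia, integral_const_mul, integral_const_mul, z0 n (by omega)] at e2
    have : a * ∫ x, x * (h n).eval x ∂μ = 0 := by linarith
    rcases mul_eq_zero.mp this with h' | h'
    · exact absurd h' (ne_of_gt ha)
    · exact h'
  have z2 : ∀ n : ℕ, 3 ≤ n → ∫ x, x ^ 2 * (h n).eval x ∂μ = 0 := by
    intro n hn
    have e := hortho 2 n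
    rw [if_neg (by omega)] at e
    have i1 := intPoly (h n)
    have i2 : Integrable (fun x => x * (h n).eval x) μ := by
      have := intPoly (Polynomial.X * h n)
      simp only [Polynomial.eval_mul, Polynomial.eval_X] at this
      exact this
    have i3 : Integrable (fun x => x ^ 2 * (h n).eval x) μ := by
      have := intPoly (Polynomial.X ^ 2 * h n)
      simp only [Polynomial.eval_mul, Polynomial.eval_pow, Polynomial.eval_X] at this
      exact this
    have e2 : ∫ x, (r2 * (h n).eval x + (q2 * (x * (h n).eval x)
        + p2 * (x ^ 2 * (h n).eval x))) ∂μ = 0 := by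
      rw [← e]
      congr 1
      funext x
      rw [heval2]; ring
    have ir : Integrable (fun x : ℝ => r2 * (h n).eval x) μ := i1.const_mul r2
    have iq : Integrable (fun x : ℝ => q2 * (x * (h n).eval x)) μ := i2.const_mul q2
    have ip : Integrable (fun x : ℝ => p2 * (x ^ 2 * (h n).eval x)) μ := i3.const_mul p2
    have iqp : Integrable (fun x : ℝ => q2 * (x * (h n).eval x)
        + p2 * (x ^ 2 * (h n).eval x)) μ := iq.add ip
    rw [integral_add ir iqp, integral_add iq ip, integral_const_mul,
      integral_const_mul, integral_const_mul, z0 n (by omega), z1 n (by omega)] at e2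
    have : p2 * ∫ x, x ^ 2 * (h n).eval x ∂μ = 0 := by linarith
    rcases mul_eq_zero.mp this with h' | h'
    · exact absurd h' (ne_of_gt hp2)
    · exact h'
  -- abstract coefficients cInt j n = ∫ x^j hₙ dμ
  obtain ⟨cInt, hcInt⟩ :
      ∃ c : ℕ → ℕ → ℝ, ∀ j n : ℕ, c j n = ∫ x, x ^ j * (h n).eval x ∂μ :=
    ⟨_, fun _ _ => rfl⟩
  have zlow : ∀ j n : ℕ, j ≤ 2 → 3 ≤ n → cInt j n = 0 := by
    intro j n hj hn
    rw [hcInt]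
    interval_cases j
    · simpa using z0 n (by omega)
    · simpa using z1 n (by omega)
    · exact z2 n hn
  -- values of cInt for n = 0
  have cj0 : ∀ j : ℕ, cInt j 0 = M j := by
    intro j
    rw [hcInt, hMdef]
    congr 1
    funext x
    rw [hh0, mul_one]
  -- small values
  have c01 : cInt 0 1 = 0 := by
    rw [hcInt]
    simpa using z0 1 (by omega)
  have c02 : cInt 0 2 = 0 := by
    rw [hcInt]
    simpa using z0 2 (by omega)
  have c12 : cInt 1 2 = 0 := by
    rw [hcInt]
    simpa using z1 2 (by omega)
  have c11 : cInt 1 1 = b * M 1 + a * M 2 := by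
    rw [hcInt, show (fun x : ℝ => x ^ 1 * (h 1).eval x)
        = fun x : ℝ => 0 + b * x + a * x ^ 2 + 0 * x ^ 3 + 0 * x ^ 4 from
      funext fun x => by rw [heval1]; ring, int4]
    ring
  have c21 : cInt 2 1 = b * M 2 + a * M 3 := by
    rw [hcInt, show (fun x : ℝ => x ^ 2 * (h 1).eval x)
        = fun x : ℝ => 0 + 0 * x + b * x ^ 2 + a * x ^ 3 + 0 * x ^ 4 from
      funext fun x => by rw [heval1]; ring, int4]
    ring
  have c31 : cInt 3 1 = b * M 3 + a * M 4 := by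
    rw [hcInt, show (fun x : ℝ => x ^ 3 * (h 1).eval x)
        = fun x : ℝ => 0 + 0 * x + 0 * x ^ 2 + b * x ^ 3 + a * x ^ 4 from
      funext fun x => by rw [heval1]; ring, int4]
    ring
  have c22v : cInt 2 2 = r2 * M 2 + q2 * M 3 + p2 * M 4 := by
    rw [hcInt, show (fun x : ℝ => x ^ 2 * (h 2).eval x)
        = fun x : ℝ => 0 + 0 * x + r2 * x ^ 2 + q2 * x ^ 3 + p2 * x ^ 4 from
      funext fun x => by rw [heval2]; ring, int4]
    ring
  -- orthogonality relations in terms of raw moments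
  have E1 : b + a * M 1 = 0 := by
    have e := hortho 0 1
    rw [if_neg (by omega)] at e
    rw [show (fun x : ℝ => (h 0).eval x * (h 1).eval x)
        = fun x : ℝ => b + a * x + 0 * x ^ 2 + 0 * x ^ 3 + 0 * x ^ 4 from
      funext fun x => by rw [hh0, heval1]; ring, int4] at e
    linarith
  have E2 : b ^ 2 + 2 * a * b * M 1 + a ^ 2 * M 2 = 1 := by
    have e := hortho 1 1
    rw [if_pos rfl] at e
    rw [show (fun x : ℝ => (h 1).eval x * (h 1).eval x)
        = fun x : ℝ => b ^ 2 + 2 * a * b * x + a ^ 2 * x ^ 2 + 0 * x ^ 3 + 0 * x ^ 4 from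
      funext fun x => by rw [heval1]; ring, int4] at e
    linarith
  have E3 : r2 + q2 * M 1 + p2 * M 2 = 0 := by
    have e := hortho 0 2
    rw [if_neg (by omega)] at e
    rw [show (fun x : ℝ => (h 0).eval x * (h 2).eval x)
        = fun x : ℝ => r2 + q2 * x + p2 * x ^ 2 + 0 * x ^ 3 + 0 * x ^ 4 from
      funext fun x => by rw [hh0, heval2]; ring, int4] at e
    linarith
  have E4 : b * r2 + (b * q2 + a * r2) * M 1 + (b * p2 + a * q2) * M 2
      + a * p2 * M 3 = 0 := by
    have e := hortho 1 2
    rw [if_neg (by omega)] at e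
    rw [show (fun x : ℝ => (h 1).eval x * (h 2).eval x)
        = fun x : ℝ => b * r2 + (b * q2 + a * r2) * x + (b * p2 + a * q2) * x ^ 2
          + (a * p2) * x ^ 3 + 0 * x ^ 4 from
      funext fun x => by rw [heval1, heval2]; ring, int4] at e
    linarith
  -- normalization for h 2 via the trick  p2 * ⟨x², h2⟩ = 1
  have hpc : p2 * cInt 2 2 = 1 := by
    have e := hortho 2 2
    rw [if_pos rfl] at e
    have i1 := intPoly (h 2)
    have i2 : Integrable (fun x => x * (h 2).eval x) μ := by
      have := intPoly (Polynomial.X * h 2)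
      simp only [Polynomial.eval_mul, Polynomial.eval_X] at this
      exact this
    have i3 : Integrable (fun x => x ^ 2 * (h 2).eval x) μ := by
      have := intPoly (Polynomial.X ^ 2 * h 2)
      simp only [Polynomial.eval_mul, Polynomial.eval_pow, Polynomial.eval_X] at this
      exact this
    have e2 : ∫ x, (r2 * (h 2).eval x + (q2 * (x * (h 2).eval x)
        + p2 * (x ^ 2 * (h 2).eval x))) ∂μ = 1 := by
      rw [← e]
      congr 1
      funext x
      conv_rhs => rw [heval2 x]
      rw [heval2]; ring
    have ir : Integrable (fun x : ℝ => r2 * (h 2).eval x) μ := i1.const_mul r2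
    have iq : Integrable (fun x : ℝ => q2 * (x * (h 2).eval x)) μ := i2.const_mul q2
    have ip : Integrable (fun x : ℝ => p2 * (x ^ 2 * (h 2).eval x)) μ := i3.const_mul p2
    have iqp : Integrable (fun x : ℝ => q2 * (x * (h 2).eval x)
        + p2 * (x ^ 2 * (h 2).eval x)) μ := iq.add ip
    rw [integral_add ir iqp, integral_add iq ip, integral_const_mul,
      integral_const_mul, integral_const_mul, z0 2 (by omega), z1 2 (by omega)] at e2
    rw [hcInt]
    linarith
  -- derived relations
  have hb : b = -(a * M 1) := by linarith
  rw [hb] at E2 c11 c21 c31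
  have ha2 : a ^ 2 * (M 2 - M 1 ^ 2) = 1 := by linear_combination E2
  have G : a * (r2 * M 1 + q2 * M 2 + p2 * M 3) = 0 := by
    linear_combination E4 - b * E3
  have G' : r2 * M 1 + q2 * M 2 + p2 * M 3 = 0 := by
    rcases mul_eq_zero.mp G with h' | h'
    · exact absurd h' (ne_of_gt ha)
    · exact h'
  have hq : q2 * (M 2 - M 1 ^ 2) + p2 * (M 3 - M 1 * M 2) = 0 := by
    linear_combination G' - M 1 * E3
  have hpc' : p2 * (r2 * M 2 + q2 * M 3 + p2 * M 4) = 1 := by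
    rw [c22v] at hpc; exact hpc
  have hp2D : p2 ^ 2 * ((M 2 - M 1 ^ 2) * (M 4 - M 2 ^ 2) - (M 3 - M 1 * M 2) ^ 2)
      = M 2 - M 1 ^ 2 := by
    linear_combination (M 2 - M 1 ^ 2) * hpc' - (M 2 - M 1 ^ 2) * p2 * M 2 * E3
      - p2 * (M 3 - M 1 * M 2) * hq
  have hc22D : (r2 * M 2 + q2 * M 3 + p2 * M 4) ^ 2 * (M 2 - M 1 ^ 2)
      = (M 2 - M 1 ^ 2) * (M 4 - M 2 ^ 2) - (M 3 - M 1 * M 2) ^ 2 := by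
    linear_combination (-((r2 * M 2 + q2 * M 3 + p2 * M 4) ^ 2)) * hp2D
      + ((M 2 - M 1 ^ 2) * (M 4 - M 2 ^ 2) - (M 3 - M 1 * M 2) ^ 2)
        * (p2 * (r2 * M 2 + q2 * M 3 + p2 * M 4) + 1) * hpc'
  -- central moments in raw moments
  have hν1 : ν = M 1 := by
    rw [hν, hMdef]
    congr 1
    funext x
    rw [pow_one]
  have hm2 : m 2 = M 2 - M 1 ^ 2 := by
    rw [hm 2, show (fun x : ℝ => (x - ν) ^ 2)
        = fun x : ℝ => ν ^ 2 + (-(2 * ν)) * x + 1 * x ^ 2 + 0 * x ^ 3 + 0 * x ^ 4 from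
      funext fun x => by ring, int4, hν1]
    ring
  have hm3 : m 3 = M 3 - 3 * M 1 * M 2 + 2 * M 1 ^ 3 := by
    rw [hm 3, show (fun x : ℝ => (x - ν) ^ 3)
        = fun x : ℝ => (-ν) ^ 3 + (3 * ν ^ 2) * x + (-(3 * ν)) * x ^ 2 + 1 * x ^ 3
          + 0 * x ^ 4 from funext fun x => by ring, int4, hν1]
    ring
  have hm4 : m 4 = M 4 - 4 * M 1 * M 3 + 6 * M 1 ^ 2 * M 2 - 3 * M 1 ^ 4 := by
    rw [hm 4, show (fun x : ℝ => (x - ν) ^ 4)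
        = fun x : ℝ => ν ^ 4 + (-(4 * ν ^ 3)) * x + (6 * ν ^ 2) * x ^ 2
          + (-(4 * ν)) * x ^ 3 + 1 * x ^ 4 from funext fun x => by ring, int4, hν1]
    ring
  -- positivity of m 2
  have hm2nonneg : 0 ≤ m 2 := by
    rw [hm 2]
    exact integral_nonneg fun x => sq_nonneg _
  have hm2ne : m 2 ≠ 0 := by
    intro h0
    rw [h0] at hpos
    simp at hpos
  have hm2pos : 0 < m 2 := lt_of_le_of_ne hm2nonneg (Ne.symm hm2ne)
  -- joint moments
  have key : ∀ j k : ℕ, (∫ ω, (X τ ω) ^ j * (X (τ + t) ω) ^ k ∂(volume : Measure Ω))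
      = ∑' n : ℕ, Real.exp (-(α n) * t) * cInt j n * cInt k n := by
    intro j k
    have e := hjoint (Polynomial.X ^ j) (Polynomial.X ^ k)
    simp only [Polynomial.eval_pow, Polynomial.eval_X] at e
    rw [e]
    exact tsum_congr fun n => by rw [hcInt, hcInt]
  have J : ∀ j k : ℕ, j + k = 4 →
      (∫ ω, (X τ ω) ^ j * (X (τ + t) ω) ^ k ∂(volume : Measure Ω))
        = cInt j 0 * cInt k 0
          + Real.exp (-(α 1) * t) * cInt j 1 * cInt k 1
          + Real.exp (-(α 2) * t) * cInt j 2 * cInt k 2 := by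
    intro j k hjk
    rw [key j k, tsum_eq_sum (s := Finset.range 3) ?_]
    · simp only [Finset.sum_range_succ, Finset.sum_range_zero, hα0]
      rw [neg_zero, zero_mul, Real.exp_zero]
      ring
    · intro n hn
      have hn3 : 3 ≤ n := by
        simp only [Finset.mem_range, not_lt] at hn
        omega
      rcases le_or_gt j 2 with hj | hj
      · rw [zlow j n hj hn3]; ring
      · have hk : k ≤ 2 := by omega
        rw [zlow k n hk hn3]; ring
  -- integrability over Ω
  have Ijk : ∀ j k : ℕ,
      Integrable (fun ω => (X τ ω) ^ j * (X (τ + t) ω) ^ k) (volume : Measure Ω) := by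
    intro j k
    have := hintΩ (Polynomial.X ^ j) (Polynomial.X ^ k)
    simp only [Polynomial.eval_pow, Polynomial.eval_X] at this
    exact this
  -- expand the fourth power
  have expand : ∫ ω, (X τ ω - X (τ + t) ω) ^ 4 ∂(volume : Measure Ω)
      = (∫ ω, (X τ ω) ^ 4 * (X (τ + t) ω) ^ 0 ∂(volume : Measure Ω))
        + 6 * (∫ ω, (X τ ω) ^ 2 * (X (τ + t) ω) ^ 2 ∂(volume : Measure Ω))
        + (∫ ω, (X τ ω) ^ 0 * (X (τ + t) ω) ^ 4 ∂(volume : Measure Ω))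
        - (4 * (∫ ω, (X τ ω) ^ 3 * (X (τ + t) ω) ^ 1 ∂(volume : Measure Ω))
          + 4 * (∫ ω, (X τ ω) ^ 1 * (X (τ + t) ω) ^ 3 ∂(volume : Measure Ω))) := by
    rw [show (fun ω => (X τ ω - X (τ + t) ω) ^ 4)
        = fun ω => ((X τ ω) ^ 4 * (X (τ + t) ω) ^ 0
            + 6 * ((X τ ω) ^ 2 * (X (τ + t) ω) ^ 2)
            + (X τ ω) ^ 0 * (X (τ + t) ω) ^ 4)
          - (4 * ((X τ ω) ^ 3 * (X (τ + t) ω) ^ 1)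
            + 4 * ((X τ ω) ^ 1 * (X (τ + t) ω) ^ 3)) from
      funext fun ω => by ring]
    have i22 : Integrable (fun ω => 6 * ((X τ ω) ^ 2 * (X (τ + t) ω) ^ 2))
        (volume : Measure Ω) := (Ijk 2 2).const_mul 6
    have i31 : Integrable (fun ω => 4 * ((X τ ω) ^ 3 * (X (τ + t) ω) ^ 1))
        (volume : Measure Ω) := (Ijk 3 1).const_mul 4
    have i13 : Integrable (fun ω => 4 * ((X τ ω) ^ 1 * (X (τ + t) ω) ^ 3))
        (volume : Measure Ω) := (Ijk 1 3).const_mul 4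
    have iA : Integrable (fun ω => (X τ ω) ^ 4 * (X (τ + t) ω) ^ 0
        + 6 * ((X τ ω) ^ 2 * (X (τ + t) ω) ^ 2)) (volume : Measure Ω) := (Ijk 4 0).add i22
    have iB : Integrable (fun ω => (X τ ω) ^ 4 * (X (τ + t) ω) ^ 0
        + 6 * ((X τ ω) ^ 2 * (X (τ + t) ω) ^ 2)
        + (X τ ω) ^ 0 * (X (τ + t) ω) ^ 4) (volume : Measure Ω) := iA.add (Ijk 0 4)
    have iC : Integrable (fun ω => 4 * ((X τ ω) ^ 3 * (X (τ + t) ω) ^ 1)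
        + 4 * ((X τ ω) ^ 1 * (X (τ + t) ω) ^ 3)) (volume : Measure Ω) := i31.add i13
    rw [integral_sub iB iC, integral_add iA (Ijk 0 4), integral_add (Ijk 4 0) i22,
      integral_add i31 i13, integral_const_mul, integral_const_mul, integral_const_mul]
  rw [expand, J 4 0 (by norm_num), J 2 2 (by norm_num), J 0 4 (by norm_num),
    J 3 1 (by norm_num), J 1 3 (by norm_num), cj0 4, cj0 0, cj0 2, cj0 3, cj0 1,
    c01, c02, c12, c11, c21, c31, c22v, hM0]
  -- final pieces
  have hS0 : 2 * M 4 - 8 * M 1 * M 3 + 6 * M 2 ^ 2 = 2 * (m 4 + 3 * (m 2) ^ 2) := by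
    rw [hm2, hm4]; ring
  have hS1 : -8 * ((-(a * M 1) * M 3 + a * M 4) * (-(a * M 1) * M 1 + a * M 2))
      + 6 * (-(a * M 1) * M 2 + a * M 3) ^ 2
      = -2 * (4 * m 2 * m 4 - 3 * (m 3) ^ 2) / m 2 := by
    rw [eq_div_iff hm2ne, hm2, hm3, hm4]
    linear_combination (-8 * (M 4 - M 1 * M 3) * (M 2 - M 1 ^ 2)
      + 6 * (M 3 - M 1 * M 2) ^ 2) * ha2
  have hS2 : 6 * (r2 * M 2 + q2 * M 3 + p2 * M 4) ^ 2
      = 6 * (m 2 * m 4 - (m 3) ^ 2 - (m 2) ^ 3) / m 2 := by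
    rw [eq_div_iff hm2ne, hm2, hm3, hm4]
    linear_combination 6 * hc22D
  linear_combination hS0 + Real.exp (-(α 1) * t) * hS1 + Real.exp (-(α 2) * t) * hS2
end

section
/- For the Beta distribution on (−1,1) with density f_B(x|γ,β) = 2^{1−γ−β}(1+x)^{γ−1}(1−x)^{β−1}/B(γ,β) (γ, β > 0), with skewness s = 2(β−γ)√(γ+β+1)/((γ+β+2)√(γβ)) and excess kurtosis κ = 6((γ−β)²(γ+β+1) − γβ(γ+β+2))/(γβ(γ+β+2)(γ+β+3)), the continuity coefficient satisfies (12 + 4κ − 3s²)/(6 + 3κ − 3s²) = 2 + 2/(γ+β). -/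
/-- For the Beta distribution on `(-1,1)` with parameters `γ, β > 0`, whose skewness
is `s = 2(β-γ)√(γ+β+1)/((γ+β+2)√(γβ))` and excess kurtosis is
`κ = 6((γ-β)²(γ+β+1) - γβ(γ+β+2))/(γβ(γ+β+2)(γ+β+3))`, the continuity coefficient
satisfies `(12 + 4κ - 3s²)/(6 + 3κ - 3s²) = 2 + 2/(γ+β)`. -/
theorem beta_continuity_coefficient
    (γ β s κ : ℝ) (hγ : 0 < γ) (hβ : 0 < β)
    (hs : s = 2 * (β - γ) * Real.sqrt (γ + β + 1)
      / ((γ + β + 2) * Real.sqrt (γ * β)))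
    (hκ : κ = 6 * ((γ - β) ^ 2 * (γ + β + 1) - γ * β * (γ + β + 2))
      / (γ * β * (γ + β + 2) * (γ + β + 3))) :
    6 + 3 * κ - 3 * s ^ 2 ≠ 0 ∧
    (12 + 4 * κ - 3 * s ^ 2) / (6 + 3 * κ - 3 * s ^ 2) = 2 + 2 / (γ + β) := by
  have hp : 0 < γ * β := mul_pos hγ hβ
  have h1 : (0:ℝ) < γ + β + 1 := by linarith
  have h2 : (0:ℝ) < γ + β + 2 := by linarith
  have h3 : (0:ℝ) < γ + β + 3 := by linarith
  have ha : (0:ℝ) < γ + β := by linarith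
  have hsqp : Real.sqrt (γ * β) ≠ 0 := by positivity
  have hs2 : s ^ 2 = 4 * (β - γ) ^ 2 * (γ + β + 1) / ((γ + β + 2) ^ 2 * (γ * β)) := by
    rw [hs, div_pow, mul_pow, mul_pow, mul_pow, Real.sq_sqrt h1.le,
      Real.sq_sqrt hp.le]
    ring
  have hD : 6 + 3 * κ - 3 * s ^ 2
      = 6 * (γ + β) ^ 3 * (γ + 1) * (β + 1) / (γ * β * (γ + β + 2) ^ 2 * (γ + β + 3)) := by
    rw [hκ, hs2]
    field_simp
    ring
  have hDpos : 0 < 6 + 3 * κ - 3 * s ^ 2 := by rw [hD]; positivity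
  refine ⟨ne_of_gt hDpos, ?_⟩
  rw [div_eq_iff (ne_of_gt hDpos), hD, hκ, hs2]
  field_simp
  ring
end
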